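/- The function γ(η) = (η/(η+1)) exp((i/(3π)) ln²(η+1)), η > 0, belongs to L∞((0,∞)) (indeed |γ(η)| ≤ 1) but does not belong to VSO((0,∞)): there exist sequences t_n, t'_n > 0 with t'_n/t_n → 1 but |γ(t_n) − γ(t'_n)| not tending to 0. -/

import Mathlib

open Filter Real

def VSO (φ : ℝ → ℂ) : Prop :=
  ∀ ε > (0:ℝ), ∃ δ > (0:ℝ), ∀ t t' : ℝ, 0 < t → 0 < t' →
    |t' / t - 1| < δ → ‖φ t - φ t'‖ < ε

/-!
Substituting `η = e^a - 1` gives `γ(e^a - 1) = (1 - e^{-a}) exp(i a² / (3π))`. For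
`s = √(a² + 3π²)` the phases at `a` and `s` differ by exactly `π`, so the two values of `γ` are
nearly antipodal and `|γ(e^a - 1) - γ(e^s - 1)| → 2`, while `s - a → 0` forces
`(e^s - 1)/(e^a - 1) → 1`.
-/

open Topology

theorem VSO.tendsto_norm_sub {φ : ℝ → ℂ} (hφ : VSO φ) {ι : Type*} {l : Filter ι}
    {t t' : ι → ℝ} (ht : ∀ i, 0 < t i) (ht' : ∀ i, 0 < t' i)
    (hratio : Tendsto (fun i => t' i / t i) l (𝓝 1)) :
    Tendsto (fun i => ‖φ (t i) - φ (t' i)‖) l (𝓝 0) := by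
  refine Metric.tendsto_nhds.2 fun ε hε => ?_
  obtain ⟨δ, hδ, hφδ⟩ := hφ ε hε
  filter_upwards [Metric.tendsto_nhds.1 hratio δ hδ] with i hi
  simpa using hφδ _ _ (ht i) (ht' i) hi

noncomputable def chirp (x : ℝ) : ℂ := Complex.exp (Complex.I / (3 * π) * (x : ℂ) ^ 2)

noncomputable def γ (η : ℝ) : ℂ := ((η / (η + 1) : ℝ) : ℂ) * chirp (Real.log (η + 1))

noncomputable def antipode (a : ℝ) : ℝ := √(a ^ 2 + 3 * π ^ 2)

theorem norm_chirp (x : ℝ) : ‖chirp x‖ = 1 := by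
  rw [chirp, show Complex.I / (3 * π) * (x : ℂ) ^ 2 = ((x ^ 2 / (3 * π) : ℝ) : ℂ) * Complex.I by
    push_cast; ring]
  exact Complex.norm_exp_ofReal_mul_I _

theorem sq_antipode (a : ℝ) : antipode a ^ 2 = a ^ 2 + 3 * π ^ 2 :=
  Real.sq_sqrt (by positivity)

theorem le_antipode (a : ℝ) : a ≤ antipode a :=
  Real.le_sqrt_of_sq_le (by nlinarith [pi_pos])

theorem chirp_antipode (a : ℝ) : chirp (antipode a) = -chirp a := by
  have hπ : (π : ℂ) ≠ 0 := Complex.ofReal_ne_zero.2 pi_ne_zero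
  have hsq : ((antipode a : ℝ) : ℂ) ^ 2 = (a : ℂ) ^ 2 + 3 * (π : ℂ) ^ 2 := by
    exact_mod_cast sq_antipode a
  rw [chirp, chirp, hsq, show Complex.I / (3 * π) * ((a : ℂ) ^ 2 + 3 * (π : ℂ) ^ 2)
      = Complex.I / (3 * π) * (a : ℂ) ^ 2 + π * Complex.I by field_simp,
    Complex.exp_add, Complex.exp_pi_mul_I, mul_neg_one]

theorem γ_exp_sub_one (a : ℝ) : γ (exp a - 1) = ((1 - exp (-a) : ℝ) : ℂ) * chirp a := by
  rw [γ, sub_add_cancel, Real.log_exp, exp_neg]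
  congr 2
  field_simp

theorem norm_γ_le_one {η : ℝ} (hη : 0 ≤ η) : ‖γ η‖ ≤ 1 := by
  rw [γ, norm_mul, norm_chirp, mul_one, Complex.norm_real, Real.norm_eq_abs,
    abs_of_nonneg (by positivity), div_le_one (by positivity)]
  linarith

theorem norm_γ_sub_γ_antipode {a : ℝ} (ha : 0 ≤ a) :
    ‖γ (exp a - 1) - γ (exp (antipode a) - 1)‖ = 2 - exp (-a) - exp (-antipode a) := by
  have h₁ : exp (-a) ≤ 1 := exp_le_one_iff.2 (by linarith)
  have h₂ : exp (-antipode a) ≤ 1 := exp_le_one_iff.2 (by linarith [le_antipode a])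
  rw [γ_exp_sub_one, γ_exp_sub_one, chirp_antipode,
    show ∀ r s : ℝ, ∀ z : ℂ, (r : ℂ) * z - (s : ℂ) * -z = ((r + s : ℝ) : ℂ) * z by
      intros; push_cast; ring,
    norm_mul, norm_chirp, mul_one, Complex.norm_real, Real.norm_eq_abs, abs_of_nonneg (by linarith)]
  ring

theorem tendsto_sqrt_sq_add_sub_self {c : ℝ} (hc : 0 ≤ c) :
    Tendsto (fun x => √(x ^ 2 + c) - x) atTop (𝓝 0) := by
  refine squeeze_zero' ?_ ?_ (tendsto_const_nhds.div_atTop tendsto_id : Tendsto (fun x => c / x) _ _)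
  · filter_upwards [eventually_ge_atTop 0] with x hx
    exact sub_nonneg.2 (Real.le_sqrt_of_sq_le (by linarith))
  · filter_upwards [eventually_gt_atTop 0] with x hx
    rw [sub_le_iff_le_add', Real.sqrt_le_iff]
    refine ⟨by positivity, ?_⟩
    have : 2 * x * (c / x) = 2 * c := by field_simp
    nlinarith [show 0 ≤ (c / x) ^ 2 by positivity]

theorem tendsto_exp_sub_one_div_exp_sub_one {α : Type*} {l : Filter α} {a s : α → ℝ}
    (ha : Tendsto a l atTop) (hsa : Tendsto (fun x => s x - a x) l (𝓝 0)) :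
    Tendsto (fun x => (exp (s x) - 1) / (exp (a x) - 1)) l (𝓝 1) := by
  have hexp : Tendsto (fun x => exp (-a x)) l (𝓝 0) := tendsto_exp_neg_atTop_nhds_zero.comp ha
  have hnum : Tendsto (fun x => exp (s x - a x) - exp (-a x)) l (𝓝 (1 - 0)) := by
    simpa using ((continuous_exp.tendsto 0).comp hsa).sub hexp
  have hden : Tendsto (fun x => 1 - exp (-a x)) l (𝓝 (1 - 0)) := tendsto_const_nhds.sub hexp
  have hlim : Tendsto (fun x => (exp (s x - a x) - exp (-a x)) / (1 - exp (-a x))) l (𝓝 1) := by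
    simpa [Pi.div_def] using hnum.div hden (by norm_num)
  refine hlim.congr fun x => ?_
  -- multiply numerator and denominator by `e^{-a}`
  rw [← mul_div_mul_left (exp (s x) - 1) _ (exp_pos (-a x)).ne', mul_sub, mul_sub, ← exp_add,
    ← exp_add, neg_add_cancel, exp_zero, mul_one, neg_add_eq_sub]

theorem tendsto_ratio_antipode :
    Tendsto (fun a => (exp (antipode a) - 1) / (exp a - 1)) atTop (𝓝 1) :=
  tendsto_exp_sub_one_div_exp_sub_one tendsto_id (tendsto_sqrt_sq_add_sub_self (by positivity))

theorem tendsto_norm_γ_sub_γ_antipode :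
    Tendsto (fun a => ‖γ (exp a - 1) - γ (exp (antipode a) - 1)‖) atTop (𝓝 2) := by
  have ha := tendsto_exp_neg_atTop_nhds_zero
  have hs := ha.comp (tendsto_atTop_mono le_antipode tendsto_id)
  refine Tendsto.congr' ?_ (by simpa using (tendsto_const_nhds (x := (2 : ℝ))).sub ha |>.sub hs)
  filter_upwards [eventually_ge_atTop 0] with a ha
  exact (norm_γ_sub_γ_antipode ha).symm

theorem stmt_11 :
    let γ : ℝ → ℂ := fun η =>
      ((η / (η + 1) : ℝ) : ℂ) *
        Complex.exp ((Complex.I / (3 * Real.pi)) * ((Real.log (η + 1) : ℂ)) ^ 2)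
    (∀ η : ℝ, 0 < η → ‖γ η‖ ≤ 1) ∧ ¬ VSO γ ∧
      ∃ t t' : ℕ → ℝ, (∀ n, 0 < t n ∧ 0 < t' n) ∧
        Tendsto (fun n => t' n / t n) atTop (nhds 1) ∧
        ¬ Tendsto (fun n => ‖γ (t n) - γ (t' n)‖) atTop (nhds 0) := by
  have ha : Tendsto (fun n : ℕ => (n : ℝ) + 1) atTop atTop :=
    tendsto_atTop_add_const_right _ 1 tendsto_natCast_atTop_atTop
  have ha_pos (n : ℕ) : 0 < (n : ℝ) + 1 := by positivity
  have ht (n : ℕ) : 0 < exp ((n : ℝ) + 1) - 1 := sub_pos.2 (one_lt_exp_iff.2 (ha_pos n))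
  have ht' (n : ℕ) : 0 < exp (antipode ((n : ℝ) + 1)) - 1 :=
    sub_pos.2 (one_lt_exp_iff.2 ((ha_pos n).trans_le (le_antipode _)))
  have hratio := tendsto_ratio_antipode.comp ha
  have hgap : ¬Tendsto (fun n : ℕ => ‖γ (exp ((n : ℝ) + 1) - 1) -
      γ (exp (antipode ((n : ℝ) + 1)) - 1)‖) atTop (𝓝 0) := fun h =>
    two_ne_zero (tendsto_nhds_unique (tendsto_norm_γ_sub_γ_antipode.comp ha) h)
  exact ⟨fun η hη => norm_γ_le_one hη.le, fun hφ => hgap (hφ.tendsto_norm_sub ht ht' hratio),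
    _, _, fun n => ⟨ht n, ht' n⟩, hratio, hgap⟩
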